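/- arXiv:0903.2038 — 2 statements merged into one kernel-verified Lean document; each statement's English description precedes it below -/
import Mathlib

section
/- Let (Ω, Σ, μ) be a measure space, G a Banach space, p ∈ [1, ∞), and let T ∈ ℒ(L^p(Ω; G)) be a local operator. Then for every measurable set A of finite positive measure and every v ∈ G, the function T(1_A v) ∈ L^p(Ω; G) is essentially bounded with ‖T(1_A v)(ω)‖_G ≤ ‖T‖ ‖v‖_G for μ-almost every ω ∈ Ω. -/
/-!
Let `g = T(1_A v)` and let `E` be the part of `A` where `‖g‖ > ‖T‖ ‖v‖`. Locality gives
`g = 0` off `A` and `T(1_E v) = g` on `E`. Hence `∫_E ‖g‖^p > (‖T‖ ‖v‖)^p μ(E)` unless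
`μ(E) = 0`, while `∫_E ‖g‖^p ≤ ‖T(1_E v)‖_p^p ≤ (‖T‖ ‖v‖)^p μ(E)`.
-/

open MeasureTheory
open scoped ENNReal

section

variable {Ω G F : Type*} [MeasurableSpace Ω] {μ : Measure Ω} [NormedAddCommGroup G] {p : ℝ≥0∞}
  [FunLike F (Lp G p μ) (Lp G p μ)]

theorem measure_eq_zero_of_lt_enorm_of_eLpNorm_restrict_le (hp0 : p ≠ 0) (hp : p ≠ ∞)
    {f : Ω → G} (hf : AEStronglyMeasurable f μ) {c : ℝ≥0∞} (hc : c ≠ ∞)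
    {E : Set Ω} (hE : MeasurableSet E) (hEfin : μ E ≠ ∞)
    (hlt : ∀ᵐ ω ∂μ, ω ∈ E → c < ‖f ω‖ₑ)
    (hle : eLpNorm f p (μ.restrict E) ≤ c * μ E ^ (1 / p.toReal)) : μ E = 0 := by
  by_contra hE0
  set q := p.toReal
  have hq : 0 < q := ENNReal.toReal_pos hp0 hp
  have hlintegral : ∫⁻ ω in E, c ^ q ∂μ < ∫⁻ ω in E, ‖f ω‖ₑ ^ q ∂μ :=
    lintegral_strict_mono (by simpa using hE0) (hf.restrict.enorm.pow_const q)
      (by simp [ENNReal.mul_eq_top, hc, hEfin, hq.le])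
      ((ae_restrict_iff' hE).2 (hlt.mono fun ω h hω => ENNReal.rpow_lt_rpow (h hω) hq))
  have := ENNReal.rpow_le_rpow hle hq.le
  rw [eLpNorm_eq_lintegral_rpow_enorm_toReal hp0 hp, ← ENNReal.rpow_mul,
    one_div_mul_cancel hq.ne', ENNReal.rpow_one, ENNReal.mul_rpow_of_nonneg _ _ hq.le,
    ← ENNReal.rpow_mul, one_div_mul_cancel hq.ne', ENNReal.rpow_one, ← setLIntegral_const] at this
  exact this.not_gt hlintegral

def IsLocalOperator (T : F) : Prop :=
  ∀ f : Lp G p μ, ∀ᵐ ω ∂μ, f ω = 0 → T f ω = 0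

theorem IsLocalOperator.ae_eq_on [AddMonoidHomClass F (Lp G p μ) (Lp G p μ)] {T : F}
    (hT : IsLocalOperator T) {f g : Lp G p μ} {E : Set Ω}
    (hfg : ∀ᵐ ω ∂μ, ω ∈ E → f ω = g ω) : ∀ᵐ ω ∂μ, ω ∈ E → T f ω = T g ω := by
  filter_upwards [hT (f - g), Lp.coeFn_sub f g, map_sub T f g ▸ Lp.coeFn_sub (T f) (T g), hfg]
    with ω hloc hsub hTsub hfg hω
  rw [← sub_eq_zero, ← Pi.sub_apply, ← hTsub]
  exact hloc (by rw [hsub, Pi.sub_apply, hfg hω, sub_self])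

theorem IsLocalOperator.ae_eq_zero_of_notMem {T : F} (hT : IsLocalOperator T) {A : Set Ω}
    (hA : MeasurableSet A) (hAfin : μ A ≠ ∞) (v : G) :
    ∀ᵐ ω ∂μ, ω ∉ A → T (indicatorConstLp p hA hAfin v) ω = 0 := by
  filter_upwards [hT (indicatorConstLp p hA hAfin v),
    indicatorConstLp_coeFn (hs := hA) (hμs := hAfin) (p := p) (c := v)] with ω hloc hind hω
  exact hloc (by rw [hind, Set.indicator_of_notMem hω])

theorem indicatorConstLp_inter_ae_eq_on {A E : Set Ω} (hA : MeasurableSet A) (hAfin : μ A ≠ ∞)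
    (hE : MeasurableSet E) (hEA : μ (E ∩ A) ≠ ∞) (v : G) :
    ∀ᵐ ω ∂μ, ω ∈ E →
      indicatorConstLp p (hE.inter hA) hEA v ω = indicatorConstLp p hA hAfin v ω := by
  filter_upwards [indicatorConstLp_coeFn (hs := hE.inter hA) (hμs := hEA) (p := p) (c := v),
    indicatorConstLp_coeFn (hs := hA) (hμs := hAfin) (p := p) (c := v)] with ω h₁ h₂ hω
  rw [h₁, h₂]
  by_cases hωA : ω ∈ A
  · simp [hω, hωA]
  · simp [hωA]

theorem IsLocalOperator.ae_enorm_apply_indicatorConstLp_le {𝕜 : Type*}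
    [NontriviallyNormedField 𝕜] [NormedSpace 𝕜 G] [Fact (1 ≤ p)] (hp : p ≠ ∞)
    {T : Lp G p μ →L[𝕜] Lp G p μ} (hT : IsLocalOperator T) {A : Set Ω} (hA : MeasurableSet A)
    (hAfin : μ A ≠ ∞) (v : G) :
    ∀ᵐ ω ∂μ, ‖T (indicatorConstLp p hA hAfin v) ω‖ₑ ≤ ‖T‖ₑ * ‖v‖ₑ := by
  have hp0 : p ≠ 0 := (zero_lt_one.trans_le Fact.out).ne'
  set g := T (indicatorConstLp p hA hAfin v)
  set c := ‖T‖ₑ * ‖v‖ₑ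
  set E := {ω | c < ‖g ω‖ₑ}
  have hE : MeasurableSet E := measurableSet_lt measurable_const (Lp.stronglyMeasurable g).enorm
  have hEA : μ (E ∩ A) ≠ ∞ := ((measure_mono Set.inter_subset_right).trans_lt hAfin.lt_top).ne
  set h := indicatorConstLp p (hE.inter hA) hEA v
  have hTh : ∀ᵐ ω ∂μ, ω ∈ E → T h ω = g ω :=
    hT.ae_eq_on (indicatorConstLp_inter_ae_eq_on hA hAfin hE hEA v)
  have hnull : μ (E ∩ A) = 0 := by
    refine measure_eq_zero_of_lt_enorm_of_eLpNorm_restrict_le hp0 hp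
      (Lp.aestronglyMeasurable (T h)) (c := c) (by finiteness) (hE.inter hA) hEA ?_ ?_
    · filter_upwards [hTh] with ω hω hωE
      rw [hω hωE.1]
      exact hωE.1
    · calc eLpNorm (T h) p (μ.restrict (E ∩ A)) ≤ ‖T h‖ₑ :=
            (eLpNorm_mono_measure _ Measure.restrict_le_self).trans_eq (Lp.enorm_def _).symm
        _ ≤ ‖T‖ₑ * ‖h‖ₑ := T.le_opENorm h
        _ = c * μ (E ∩ A) ^ (1 / p.toReal) := by
          rw [Lp.enorm_def, eLpNorm_congr_ae indicatorConstLp_coeFn,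
            eLpNorm_indicator_const (hE.inter hA) hp0 hp, mul_assoc]
  filter_upwards [hT.ae_eq_zero_of_notMem hA hAfin v, measure_eq_zero_iff_ae_notMem.1 hnull]
    with ω hoff hω
  by_cases hωA : ω ∈ A
  · exact not_lt.1 fun hlt => hω ⟨hlt, hωA⟩
  · simp [g, hoff hωA]

end

theorem statement12_general {Ω G : Type*} [MeasurableSpace Ω] (μ : Measure Ω)
    [NormedAddCommGroup G] [NormedSpace ℝ G]
    (p : ℝ≥0∞) [Fact (1 ≤ p)] (hp : p ≠ ⊤)
    (T : Lp G p μ →L[ℝ] Lp G p μ)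
    (hT : ∀ f : Lp G p μ, ∀ᵐ ω ∂μ, f ω = 0 → T f ω = 0)
    (A : Set Ω) (hA : MeasurableSet A) (hAfin : μ A ≠ ⊤) (v : G) :
    ∀ᵐ ω ∂μ, ‖T (indicatorConstLp p hA hAfin v) ω‖ ≤ ‖T‖ * ‖v‖ := by
  filter_upwards [IsLocalOperator.ae_enorm_apply_indicatorConstLp_le hp hT hA hAfin v] with ω hω
  simpa using ENNReal.toReal_mono (by finiteness) hω

/-- For a local operator `T ∈ ℒ(L^p(Ω; G))`, `p ∈ [1, ∞)`, and every measurable set `A`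
of finite positive measure and every `v ∈ G`, the function `T(1_A v)` is essentially
bounded with `‖T(1_A v)(ω)‖ ≤ ‖T‖ ‖v‖` for a.e. `ω`. -/
theorem statement12 {Ω G : Type*} [MeasurableSpace Ω] (μ : Measure Ω)
    [NormedAddCommGroup G] [NormedSpace ℝ G] [CompleteSpace G]
    (p : ℝ≥0∞) [Fact (1 ≤ p)] (hp : p ≠ ⊤)
    (T : Lp G p μ →L[ℝ] Lp G p μ)
    (hT : ∀ f : Lp G p μ, ∀ᵐ ω ∂μ, f ω = 0 → T f ω = 0)
    (A : Set Ω) (hA : MeasurableSet A) (hAfin : μ A ≠ ⊤) (hApos : 0 < μ A) (v : G) :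
    ∀ᵐ ω ∂μ, ‖T (indicatorConstLp p hA hAfin v) ω‖ ≤ ‖T‖ * ‖v‖ :=
  statement12_general μ p hp T hT A hA hAfin v
end

section
/- Let (Ω, μ) be a measure space and let F and G be (real) Banach lattices. For every bounded, positive bilinear map φ: L¹(Ω) × F → G there exists a unique bounded linear operator T: L¹(Ω; F) → G such that T(f(·)v) = φ(f, v) for all f ∈ L¹(Ω) and v ∈ F; moreover T is positive and ‖T‖ = ‖φ‖. (Equivalently: L¹(Ω; F), together with the bilinear map (f, v) ↦ f(·)v, is a p-tensor product of L¹(Ω) and F, so L¹(Ω) ⊗̂_p F ≅ L¹(Ω; F) as Banach lattices, isometrically.) -/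
/-!
The set function `s ↦ φ(1_s)`, with values in `L(F, G)`, is finitely additive and dominated
by `‖φ‖ μ`, so it integrates, exactly as the Bochner integral is built from `s ↦ μ s • ·`, to
a bounded operator `T : L¹(Ω; F) → G` with `T(1_s v) = φ(1_s) v` and `‖T‖ ≤ ‖φ‖`. Both
`f ↦ T(f(·)v)` and `f ↦ φ f v` are continuous and agree on indicators, hence everywhere, which
gives `‖φ‖ ≤ ‖T‖` since `‖f(·)v‖ ≤ ‖f‖ ‖v‖`. Any other such operator agrees with `T` on the
dense span of the functions `1_s v`, and `T` is positive because it is positive on positive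
simple functions, which are dense in the positive cone.
-/

open MeasureTheory ContinuousLinearMap
open scoped ENNReal

namespace MeasureTheory

variable {Ω E F G : Type*} [MeasurableSpace Ω] {μ : Measure Ω}
  [NormedAddCommGroup E] [NormedSpace ℝ E] [NormedAddCommGroup F] [NormedSpace ℝ F]

section Lp

variable {p : ℝ≥0∞} {s : Set Ω}

theorem indicatorConstLp_smul (hs : MeasurableSet s) (hμs : μ s ≠ ∞) (c : ℝ) (x : E) :
    indicatorConstLp p hs hμs (c • x) = c • indicatorConstLp p hs hμs x := by
  apply Lp.ext
  filter_upwards [indicatorConstLp_coeFn (p := p) (hs := hs) (hμs := hμs) (c := c • x),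
    indicatorConstLp_coeFn (p := p) (hs := hs) (hμs := hμs) (c := x),
    Lp.coeFn_smul c (indicatorConstLp p hs hμs x)] with ω h₁ h₂ h₃
  rw [h₁, h₃, Pi.smul_apply, h₂, ← Set.indicator_const_smul_apply]

variable [Fact (1 ≤ p)]

theorem Lp.continuousLinearMap_ext_indicatorConstLp (hp : p ≠ ∞) {T T' : Lp E p μ →L[ℝ] F}
    (h : ∀ s (hs : MeasurableSet s) (hμs : μ s ≠ ∞) (c : E),
      T (indicatorConstLp p hs hμs c) = T' (indicatorConstLp p hs hμs c)) :
    T = T' := by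
  ext f
  induction f using Lp.induction hp with
  | indicatorConst c hs hμs => exact h _ hs hμs.ne c
  | add _ _ _ hf hg => rw [map_add, map_add, hf, hg]
  | isClosed => exact isClosed_eq T.continuous T'.continuous

theorem coeFn_compLpL_toSpanSingleton (v : E) (f : Lp ℝ p μ) :
    (toSpanSingleton ℝ v).compLpL p μ f =ᵐ[μ] fun ω => f ω • v :=
  coeFn_compLpL _ f

theorem compLpL_toSpanSingleton_indicatorConstLp (v : E) (hs : MeasurableSet s)
    (hμs : μ s ≠ ∞) (c : ℝ) :
    (toSpanSingleton ℝ v).compLpL p μ (indicatorConstLp p hs hμs c)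
      = indicatorConstLp p hs hμs (c • v) := by
  apply Lp.ext
  filter_upwards [coeFn_compLpL_toSpanSingleton (p := p) v (indicatorConstLp p hs hμs c),
    indicatorConstLp_coeFn (p := p) (hs := hs) (hμs := hμs) (c := c),
    indicatorConstLp_coeFn (p := p) (hs := hs) (hμs := hμs) (c := c • v)] with ω h₁ h₂ h₃
  rw [h₁, h₂, h₃, Set.indicator_smul_const_apply]

theorem norm_compLpL_toSpanSingleton_le (v : E) (f : Lp ℝ p μ) :
    ‖(toSpanSingleton ℝ v).compLpL p μ f‖ ≤ ‖f‖ * ‖v‖ :=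
  calc ‖(toSpanSingleton ℝ v).compLpL p μ f‖
      ≤ ‖toSpanSingleton ℝ v‖ * ‖f‖ := le_of_opNorm_le _ (norm_compLpL_le _) f
    _ = ‖f‖ * ‖v‖ := by rw [norm_toSpanSingleton, mul_comm]

end Lp

namespace L1

open Classical in
noncomputable def indicatorSetFun (φ : Lp ℝ 1 μ →L[ℝ] E) (s : Set Ω) : E :=
  if h : MeasurableSet s ∧ μ s ≠ ∞ then φ (indicatorConstLp 1 h.1 h.2 1) else 0

theorem indicatorSetFun_of_measurableSet (φ : Lp ℝ 1 μ →L[ℝ] E) {s : Set Ω}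
    (hs : MeasurableSet s) (hμs : μ s ≠ ∞) :
    indicatorSetFun φ s = φ (indicatorConstLp 1 hs hμs 1) :=
  dif_pos ⟨hs, hμs⟩

theorem dominatedFinMeasAdditive_indicatorSetFun (φ : Lp ℝ 1 μ →L[ℝ] E) :
    DominatedFinMeasAdditive μ (indicatorSetFun φ) ‖φ‖ := by
  constructor
  · intro s t hs ht hμs hμt hst
    rw [indicatorSetFun_of_measurableSet φ (hs.union ht) (measure_union_ne_top hμs hμt),
      indicatorSetFun_of_measurableSet φ hs hμs, indicatorSetFun_of_measurableSet φ ht hμt,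
      indicatorConstLp_disjoint_union hs ht hμs hμt hst, map_add]
  · intro s hs hμs
    calc ‖indicatorSetFun φ s‖
        = ‖φ (indicatorConstLp 1 hs hμs.ne 1)‖ := by
          rw [indicatorSetFun_of_measurableSet φ hs hμs.ne]
      _ ≤ ‖φ‖ * ‖indicatorConstLp 1 hs hμs.ne (1 : ℝ)‖ := φ.le_opNorm _
      _ = ‖φ‖ * μ.real s := by
          rw [norm_indicatorConstLp one_ne_zero ENNReal.one_ne_top]
          simp [Measure.real]

variable [NormedAddCommGroup G] [NormedSpace ℝ G] [CompleteSpace G]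

noncomputable def tensorLift (φ : Lp ℝ 1 μ →L[ℝ] F →L[ℝ] G) : Lp F 1 μ →L[ℝ] G :=
  setToL1 (dominatedFinMeasAdditive_indicatorSetFun φ)

theorem tensorLift_indicatorConstLp (φ : Lp ℝ 1 μ →L[ℝ] F →L[ℝ] G) {s : Set Ω}
    (hs : MeasurableSet s) (hμs : μ s ≠ ∞) (v : F) :
    tensorLift φ (indicatorConstLp 1 hs hμs v) = φ (indicatorConstLp 1 hs hμs 1) v := by
  rw [tensorLift, setToL1_indicatorConstLp _ hs hμs, indicatorSetFun_of_measurableSet φ hs hμs]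

theorem tensorLift_compLpL_toSpanSingleton (φ : Lp ℝ 1 μ →L[ℝ] F →L[ℝ] G) (v : F) :
    tensorLift φ ∘L (toSpanSingleton ℝ v).compLpL 1 μ = φ.flip v := by
  refine Lp.continuousLinearMap_ext_indicatorConstLp ENNReal.one_ne_top fun s hs hμs c => ?_
  have hc : indicatorConstLp 1 hs hμs c = c • indicatorConstLp 1 hs hμs (1 : ℝ) := by
    rw [← indicatorConstLp_smul, smul_eq_mul, mul_one]
  rw [comp_apply, compLpL_toSpanSingleton_indicatorConstLp, tensorLift_indicatorConstLp,
    flip_apply, hc, map_smul, map_smul, smul_apply]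

theorem tensorLift_apply_of_ae_eq (φ : Lp ℝ 1 μ →L[ℝ] F →L[ℝ] G) {f : Lp ℝ 1 μ} {v : F}
    {g : Lp F 1 μ} (hg : g =ᵐ[μ] fun ω => f ω • v) : tensorLift φ g = φ f v := by
  have hg' : g = (toSpanSingleton ℝ v).compLpL 1 μ f :=
    Lp.ext (hg.trans (coeFn_compLpL_toSpanSingleton v f).symm)
  rw [hg', ← comp_apply, tensorLift_compLpL_toSpanSingleton, flip_apply]

theorem eq_tensorLift (φ : Lp ℝ 1 μ →L[ℝ] F →L[ℝ] G) {T : Lp F 1 μ →L[ℝ] G}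
    (hT : ∀ (f : Lp ℝ 1 μ) (v : F) (g : Lp F 1 μ), g =ᵐ[μ] (fun ω => f ω • v) → T g = φ f v) :
    T = tensorLift φ := by
  refine Lp.continuousLinearMap_ext_indicatorConstLp ENNReal.one_ne_top fun s hs hμs v => ?_
  have hg : indicatorConstLp 1 hs hμs v
      =ᵐ[μ] fun ω => indicatorConstLp 1 hs hμs (1 : ℝ) ω • v := by
    conv_lhs => rw [← one_smul ℝ v, ← compLpL_toSpanSingleton_indicatorConstLp]
    exact coeFn_compLpL_toSpanSingleton v _
  rw [hT _ _ _ hg, tensorLift_apply_of_ae_eq φ hg]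

theorem norm_tensorLift (φ : Lp ℝ 1 μ →L[ℝ] F →L[ℝ] G) : ‖tensorLift φ‖ = ‖φ‖ := by
  refine le_antisymm (norm_setToL1_le _ (norm_nonneg φ)) ?_
  refine opNorm_le_bound₂ φ (norm_nonneg _) fun f v => ?_
  calc ‖φ f v‖ = ‖tensorLift φ ((toSpanSingleton ℝ v).compLpL 1 μ f)‖ := by
        rw [← comp_apply, tensorLift_compLpL_toSpanSingleton, flip_apply]
    _ ≤ ‖tensorLift φ‖ * (‖f‖ * ‖v‖) :=
        le_opNorm_of_le _ (norm_compLpL_toSpanSingleton_le v f)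
    _ = ‖tensorLift φ‖ * ‖f‖ * ‖v‖ := (mul_assoc _ _ _).symm

theorem tensorLift_nonneg [PartialOrder F] [PartialOrder G] [IsOrderedAddMonoid G]
    [ClosedIciTopology G] {φ : Lp ℝ 1 μ →L[ℝ] F →L[ℝ] G}
    (hφ : ∀ f : Lp ℝ 1 μ, 0 ≤ f → ∀ v : F, 0 ≤ v → 0 ≤ φ f v) {g : Lp F 1 μ} (hg : 0 ≤ g) :
    0 ≤ tensorLift φ g := by
  refine setToL1_nonneg _ (fun s hs hμs v hv => ?_) hg
  rw [indicatorSetFun_of_measurableSet φ hs hμs.ne]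
  refine hφ _ ((Lp.coeFn_nonneg _).1 ?_) v hv
  filter_upwards [indicatorConstLp_coeFn (p := 1) (hs := hs) (hμs := hμs.ne) (c := (1 : ℝ))]
    with ω h
  rw [h]
  exact Set.indicator_nonneg (fun _ _ => zero_le_one) ω

end L1

end MeasureTheory

theorem statement16_general {Ω F G : Type*} [MeasurableSpace Ω] (μ : Measure Ω)
    [NormedAddCommGroup F] [Lattice F] [NormedSpace ℝ F]
    [NormedAddCommGroup G] [Lattice G] [HasSolidNorm G] [IsOrderedAddMonoid G] [NormedSpace ℝ G] [CompleteSpace G]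
    (φ : Lp ℝ 1 μ →L[ℝ] F →L[ℝ] G)
    (hφpos : ∀ f : Lp ℝ 1 μ, (∀ᵐ ω ∂μ, 0 ≤ f ω) → ∀ v : F, 0 ≤ v → 0 ≤ φ f v) :
    (∃! T : Lp F 1 μ →L[ℝ] G,
      ∀ (f : Lp ℝ 1 μ) (v : F) (g : Lp F 1 μ),
        (g : Ω → F) =ᵐ[μ] (fun ω => f ω • v) → T g = φ f v) ∧
    (∀ T : Lp F 1 μ →L[ℝ] G,
      (∀ (f : Lp ℝ 1 μ) (v : F) (g : Lp F 1 μ),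
        (g : Ω → F) =ᵐ[μ] (fun ω => f ω • v) → T g = φ f v) →
      (∀ g : Lp F 1 μ, (∀ᵐ ω ∂μ, 0 ≤ g ω) → 0 ≤ T g) ∧ ‖T‖ = ‖φ‖) := by
  refine ⟨⟨L1.tensorLift φ, fun f v g hg => L1.tensorLift_apply_of_ae_eq φ hg,
    fun T hT => L1.eq_tensorLift φ hT⟩, fun T hT => ?_⟩
  obtain rfl := L1.eq_tensorLift φ hT
  have hφ : ∀ f : Lp ℝ 1 μ, 0 ≤ f → ∀ v : F, 0 ≤ v → 0 ≤ φ f v :=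
    fun f hf => hφpos f ((Lp.coeFn_nonneg f).2 hf)
  exact ⟨fun g hg => L1.tensorLift_nonneg hφ ((Lp.coeFn_nonneg g).1 hg), L1.norm_tensorLift φ⟩

/-- **`L¹(Ω) ⊗̂_p F ≅ L¹(Ω; F)` (universal property of the p-tensor product).** Let
`(Ω, μ)` be a measure space and `F`, `G` real Banach lattices. For every bounded, positive
bilinear map `φ : L¹(Ω) × F → G` there is a unique bounded linear `T : L¹(Ω; F) → G` with
`T(f(·)v) = φ(f, v)`; moreover `T` is positive and `‖T‖ = ‖φ‖`. Bounded bilinear maps are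
encoded as continuous linear maps `L¹(Ω) →L F →L G`, whose operator norm is the bilinear
norm. -/
theorem statement16 {Ω F G : Type*} [MeasurableSpace Ω] (μ : Measure Ω)
    [NormedAddCommGroup F] [Lattice F] [HasSolidNorm F] [IsOrderedAddMonoid F] [NormedSpace ℝ F] [CompleteSpace F]
    [NormedAddCommGroup G] [Lattice G] [HasSolidNorm G] [IsOrderedAddMonoid G] [NormedSpace ℝ G] [CompleteSpace G]
    (φ : Lp ℝ 1 μ →L[ℝ] F →L[ℝ] G)
    (hφpos : ∀ f : Lp ℝ 1 μ, (∀ᵐ ω ∂μ, 0 ≤ f ω) → ∀ v : F, 0 ≤ v → 0 ≤ φ f v) :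
    (∃! T : Lp F 1 μ →L[ℝ] G,
      ∀ (f : Lp ℝ 1 μ) (v : F) (g : Lp F 1 μ),
        (g : Ω → F) =ᵐ[μ] (fun ω => f ω • v) → T g = φ f v) ∧
    (∀ T : Lp F 1 μ →L[ℝ] G,
      (∀ (f : Lp ℝ 1 μ) (v : F) (g : Lp F 1 μ),
        (g : Ω → F) =ᵐ[μ] (fun ω => f ω • v) → T g = φ f v) →
      (∀ g : Lp F 1 μ, (∀ᵐ ω ∂μ, 0 ≤ g ω) → 0 ≤ T g) ∧ ‖T‖ = ‖φ‖) :=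
  statement16_general μ φ hφpos
end
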